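/- Let i, j, k ∈ 𝓛 be distinct, let δa_i, δa_j, δa_k ∈ ℝ^q, and let v ∈ ℝ² satisfy φ_i(v,a_i) = φ_j(v,a_j) = φ_k(v,a_k). Define Q_v(i,j,k) := det of the 2×2 matrix whose rows are (∇_xφ_i(v,a_i) − ∇_xφ_j(v,a_j))ᵀ and (∇_xφ_i(v,a_i) − ∇_xφ_k(v,a_k))ᵀ, and assume Q_v(i,j,k) ≠ 0. Then there exist τ₁ > 0 and a unique smooth function z_v : [0,τ₁] → ℝ² with z_v(0) = v and φ_i(z_v(t), a_i + tδa_i) = φ_j(z_v(t), a_j + tδa_j) = φ_k(z_v(t), a_k + tδa_k) for all t ∈ [0,τ₁]; moreover z_v′(0) = M_v(j,k,i)δa_i + M_v(k,i,j)δa_j + M_v(i,j,k)δa_k, where M_v(i,j,k) := (1/Q_v(i,j,k)) · (∇_xφ_i(v,a_i) − ∇_xφ_j(v,a_j))^⊥ ⊗ ∇_{a_k}φ_k(v,a_k)ᵀ (a 2×q matrix). -/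

import Mathlib

open Set Metric
open scoped ENNReal NNReal

noncomputable section

/-- The plane ℝ². -/
abbrev Plane : Type := EuclideanSpace ℝ (Fin 2)

/-- The site space ℝ^q. -/
abbrev Sites (q : ℕ) : Type := EuclideanSpace ℝ (Fin q)

/-- Rotation by π/2: `(v₁,v₂)^⊥ = (−v₂,v₁)`. -/
def perp (w : Plane) : Plane := (WithLp.equiv 2 (Fin 2 → ℝ)).symm ![-(w 1), w 0]

/-- Gradient of `φ(x,a)` with respect to the spatial variable `x ∈ ℝ²`. -/
def gradX {q : ℕ} (f : Plane → Sites q → ℝ) (x : Plane) (b : Sites q) : Plane :=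
  gradient (fun y => f y b) x

/-- Gradient of `φ(x,a)` with respect to the site variable `a ∈ ℝ^q`. -/
def gradA {q : ℕ} (f : Plane → Sites q → ℝ) (x : Plane) (b : Sites q) : Sites q :=
  gradient (fun c => f x c) b

/-- The cell `V_i(a) = int {x ∈ A : φ_i(x,a_i) = min_k φ_k(x,a_k)}` of the
minimization diagram, with `A = {φ₀ < 0}`. -/
def cellMD {κ q : ℕ} (φ : Fin κ → Plane → Sites q → ℝ) (φ₀ : Plane → ℝ)
    (a : Fin κ → Sites q) (i : Fin κ) : Set Plane :=
  interior {x | φ₀ x < 0 ∧ ∀ k, φ i x (a i) ≤ φ k x (a k)}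

/-- `Q_v(i,j,k)`: determinant of the 2×2 matrix with rows
`(∇_xφ_i(v,a_i) − ∇_xφ_j(v,a_j))ᵀ` and `(∇_xφ_i(v,a_i) − ∇_xφ_k(v,a_k))ᵀ`. -/
def Qv {κ q : ℕ} (φ : Fin κ → Plane → Sites q → ℝ) (a : Fin κ → Sites q)
    (i j k : Fin κ) (v : Plane) : ℝ :=
  Matrix.det
    !![(gradX (φ i) v (a i) - gradX (φ j) v (a j)) 0,
       (gradX (φ i) v (a i) - gradX (φ j) v (a j)) 1;
       (gradX (φ i) v (a i) - gradX (φ k) v (a k)) 0,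
       (gradX (φ i) v (a i) - gradX (φ k) v (a k)) 1]

/-- `M_v(i,j,k) δ` where
`M_v(i,j,k) = ((∇_xφ_i(v,a_i) − ∇_xφ_j(v,a_j))^⊥ ⊗ ∇_{a_k}φ_k(v,a_k)ᵀ)/Q_v(i,j,k)`
is a 2×q matrix acting on the perturbation `δ ∈ ℝ^q`. -/
def Mv {κ q : ℕ} (φ : Fin κ → Plane → Sites q → ℝ) (a : Fin κ → Sites q)
    (i j k : Fin κ) (v : Plane) (δ : Sites q) : Plane :=
  ((inner ℝ (gradA (φ k) v (a k)) δ : ℝ) / Qv φ a i j k v) •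
    perp (gradX (φ i) v (a i) - gradX (φ j) v (a j))

/- ### Auxiliary material -/

lemma perp_apply0 (w : Plane) : perp w 0 = -(w 1) := rfl
lemma perp_apply1 (w : Plane) : perp w 1 = w 0 := rfl

lemma inner_plane (x y : Plane) : (inner ℝ x y : ℝ) = x 0 * y 0 + x 1 * y 1 := by
  simp [PiLp.inner_apply, Fin.sum_univ_two, RCLike.inner_apply, mul_comm]

lemma plane_ext {x y : Plane} (h0 : x 0 = y 0) (h1 : x 1 = y 1) : x = y := by
  apply PiLp.ext; intro i; fin_cases i <;> assumption

lemma cramer9 (g h u : Plane) (Q : ℝ) (hQ : Q = g 0 * h 1 - g 1 * h 0) :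
    (inner ℝ h u : ℝ) • perp g - (inner ℝ g u : ℝ) • perp h = Q • u := by
  apply plane_ext <;>
    simp [inner_plane, perp_apply0, perp_apply1, hQ, PiLp.smul_apply, PiLp.sub_apply,
      smul_eq_mul] <;> ring

/-- derivative of `(t,x) ↦ φ x (a + t δ)` at `(0,v)`. -/
def Dpsi {q : ℕ} (f : Plane → Sites q → ℝ) (a δ : Sites q) (v : Plane) : (ℝ × Plane) →L[ℝ] ℝ :=
  (innerSL ℝ (gradX f v a)).comp (ContinuousLinearMap.snd ℝ ℝ Plane) +
    (inner ℝ (gradA f v a) δ : ℝ) • (ContinuousLinearMap.fst ℝ ℝ Plane)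

lemma Dpsi_apply {q : ℕ} (f : Plane → Sites q → ℝ) (a δ : Sites q) (v : Plane) (p : ℝ × Plane) :
    Dpsi f a δ v p = (inner ℝ (gradX f v a) p.2 : ℝ) + (inner ℝ (gradA f v a) δ : ℝ) * p.1 := by
  simp [Dpsi, smul_eq_mul]

lemma hasFDerivAt_psi {q : ℕ} (f : Plane → Sites q → ℝ)
    (hf : ContDiff ℝ (⊤ : ℕ∞) (fun p : Plane × Sites q => f p.1 p.2))
    (a δ : Sites q) (v : Plane) :
    HasFDerivAt (fun p : ℝ × Plane => f p.2 (a + p.1 • δ)) (Dpsi f a δ v) (0, v) := by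
  set Φ : Plane × Sites q → ℝ := fun p => f p.1 p.2 with hΦ
  have hΦd : DifferentiableAt ℝ Φ (v, a) :=
    (hf.differentiable (by simp)).differentiableAt
  set DΦ := fderiv ℝ Φ (v, a) with hDΦ
  set ℓ : (ℝ × Plane) →L[ℝ] Plane × Sites q :=
    (ContinuousLinearMap.snd ℝ ℝ Plane).prod
      ((ContinuousLinearMap.fst ℝ ℝ Plane).smulRight δ) with hℓ
  have hL : HasFDerivAt (fun p : ℝ × Plane => (p.2, a + p.1 • δ)) ℓ (0, v) := by
    have h1 : (fun p : ℝ × Plane => (p.2, a + p.1 • δ)) = fun p => ((0:Plane), a) + ℓ p := by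
      funext p
      simp [hℓ, Prod.ext_iff]
    rw [h1]
    exact (ℓ.hasFDerivAt).const_add _
  have hcomp : HasFDerivAt (fun p : ℝ × Plane => f p.2 (a + p.1 • δ)) (DΦ.comp ℓ) (0, v) := by
    have hΦd' : HasFDerivAt Φ DΦ ((fun p : ℝ × Plane => (p.2, a + p.1 • δ)) ((0:ℝ), v)) := by
      rw [show ((fun p : ℝ × Plane => (p.2, a + p.1 • δ)) ((0:ℝ), v)) = (v, a) by simp]
      exact hΦd.hasFDerivAt
    exact HasFDerivAt.comp ((0:ℝ), v) hΦd' hL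
  have hgX : ∀ u : Plane, DΦ (u, 0) = (inner ℝ (gradX f v a) u : ℝ) := by
    intro u
    have hx : HasFDerivAt (fun y : Plane => f y a)
        (DΦ.comp (ContinuousLinearMap.inl ℝ Plane (Sites q))) v :=
      by have := HasFDerivAt.comp v hΦd.hasFDerivAt (hasFDerivAt_prodMk_left (𝕜 := ℝ) v a); exact this
    have : gradX f v a = (InnerProductSpace.toDual ℝ Plane).symm
        (DΦ.comp (ContinuousLinearMap.inl ℝ Plane (Sites q))) := by
      rw [gradX, gradient, hx.fderiv]
    rw [this, InnerProductSpace.toDual_symm_apply]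
    simp
  have hgA : ∀ u : Sites q, DΦ (0, u) = (inner ℝ (gradA f v a) u : ℝ) := by
    intro u
    have hx : HasFDerivAt (fun c : Sites q => f v c)
        (DΦ.comp (ContinuousLinearMap.inr ℝ Plane (Sites q))) a :=
      HasFDerivAt.comp a hΦd.hasFDerivAt (hasFDerivAt_prodMk_right (𝕜 := ℝ) v a)
    have : gradA f v a = (InnerProductSpace.toDual ℝ (Sites q)).symm
        (DΦ.comp (ContinuousLinearMap.inr ℝ Plane (Sites q))) := by
      rw [gradA, gradient, hx.fderiv]
    rw [this, InnerProductSpace.toDual_symm_apply]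
    simp
  have hDeq : DΦ.comp ℓ = Dpsi f a δ v := by
    apply ContinuousLinearMap.ext
    rintro ⟨s, u⟩
    have : ℓ (s, u) = (u, (0:Sites q)) + (0, s • δ) := by simp [hℓ, Prod.ext_iff]
    rw [ContinuousLinearMap.comp_apply, this, map_add, hgX, hgA, Dpsi_apply,
      real_inner_smul_right]
    ring
  rw [← hDeq]
  exact hcomp

set_option maxHeartbeats 2000000

/-- Theorem on interior vertices of minimization diagrams: if
`φ_i(v,a_i) = φ_j(v,a_j) = φ_k(v,a_k)` and `Q_v(i,j,k) ≠ 0`, then for small time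
there is a unique smooth curve `z_v` with `z_v(0) = v` along which the three
perturbed values stay equal, and
`z_v′(0) = M_v(j,k,i)δa_i + M_v(k,i,j)δa_j + M_v(i,j,k)δa_k`. -/
theorem statement9 {κ q : ℕ}
    (φ : Fin κ → Plane → Sites q → ℝ)
    (hφ : ∀ i, ContDiff ℝ (⊤ : ℕ∞) (fun p : Plane × Sites q => φ i p.1 p.2))
    (a δa : Fin κ → Sites q)
    (i j k : Fin κ) (hij : i ≠ j) (hik : i ≠ k) (hjk : j ≠ k)
    (v : Plane)
    (hvij : φ i v (a i) = φ j v (a j))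
    (hvik : φ i v (a i) = φ k v (a k))
    (hQ : Qv φ a i j k v ≠ 0) :
    ∃ τ₁ > (0:ℝ), ∃ z : ℝ → Plane,
      (ContDiffOn ℝ (⊤ : ℕ∞) z (Icc 0 τ₁) ∧ z 0 = v ∧
        ∀ t ∈ Icc (0:ℝ) τ₁,
          φ i (z t) (a i + t • δa i) = φ j (z t) (a j + t • δa j) ∧
          φ i (z t) (a i + t • δa i) = φ k (z t) (a k + t • δa k)) ∧
      -- uniqueness of the smooth curve on `[0,τ₁]`
      (∀ w : ℝ → Plane,
        (ContDiffOn ℝ (⊤ : ℕ∞) w (Icc 0 τ₁) ∧ w 0 = v ∧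
          ∀ t ∈ Icc (0:ℝ) τ₁,
            φ i (w t) (a i + t • δa i) = φ j (w t) (a j + t • δa j) ∧
            φ i (w t) (a i + t • δa i) = φ k (w t) (a k + t • δa k)) →
        EqOn w z (Icc 0 τ₁)) ∧
      -- the derivative formula
      HasDerivWithinAt z
        (Mv φ a j k i v (δa i) + Mv φ a k i j v (δa j) + Mv φ a i j k v (δa k))
        (Icc 0 τ₁) 0 := by
  classical
  have hone : (1 : WithTop ℕ∞) ≤ ((⊤ : ℕ∞) : WithTop ℕ∞) := by exact_mod_cast le_top
  set gi := gradX (φ i) v (a i) with hgi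
  set gj := gradX (φ j) v (a j) with hgj
  set gk := gradX (φ k) v (a k) with hgk
  set g : Plane := gi - gj with hg
  set h : Plane := gi - gk with hh
  set ci : ℝ := inner ℝ (gradA (φ i) v (a i)) (δa i) with hci
  set cj : ℝ := inner ℝ (gradA (φ j) v (a j)) (δa j) with hcj
  set ck : ℝ := inner ℝ (gradA (φ k) v (a k)) (δa k) with hck
  set Q : ℝ := Qv φ a i j k v with hQdef
  have hQdet : Q = g 0 * h 1 - g 1 * h 0 := by
    rw [hQdef, Qv, Matrix.det_fin_two_of]
  -- the defining map
  set ψ : Fin κ → ℝ × Plane → ℝ := fun m p => φ m p.2 (a m + p.1 • δa m) with hψdef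
  have hψs : ∀ m, ContDiff ℝ (⊤ : ℕ∞) (ψ m) := fun m =>
    (hφ m).comp (contDiff_snd.prodMk (contDiff_const.add (contDiff_fst.smul contDiff_const)))
  set G : ℝ × Plane → ℝ × ℝ × ℝ :=
    fun p => (p.1, (ψ i p - ψ j p, ψ i p - ψ k p)) with hGdef
  have hGs : ContDiff ℝ (⊤ : ℕ∞) G :=
    contDiff_fst.prodMk (((hψs i).sub (hψs j)).prodMk ((hψs i).sub (hψs k)))
  set D : (ℝ × Plane) →L[ℝ] ℝ × ℝ × ℝ :=
    (ContinuousLinearMap.fst ℝ ℝ Plane).prod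
      ((Dpsi (φ i) (a i) (δa i) v - Dpsi (φ j) (a j) (δa j) v).prod
        (Dpsi (φ i) (a i) (δa i) v - Dpsi (φ k) (a k) (δa k) v)) with hDdef
  have hDapp : ∀ p : ℝ × Plane,
      D p = (p.1, ((inner ℝ g p.2 : ℝ) + (ci - cj) * p.1,
                   (inner ℝ h p.2 : ℝ) + (ci - ck) * p.1)) := by
    intro p
    have h1 : (inner ℝ g p.2 : ℝ) = (inner ℝ gi p.2 : ℝ) - (inner ℝ gj p.2 : ℝ) := by
      rw [hg, inner_sub_left]
    have h2 : (inner ℝ h p.2 : ℝ) = (inner ℝ gi p.2 : ℝ) - (inner ℝ gk p.2 : ℝ) := by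
      rw [hh, inner_sub_left]
    simp only [hDdef, ContinuousLinearMap.prod_apply, ContinuousLinearMap.coe_fst',
      ContinuousLinearMap.sub_apply, Dpsi_apply, ← hgi, ← hgj, ← hgk, ← hci, ← hcj, ← hck,
      h1, h2]
    simp only [Prod.mk.injEq]
    exact ⟨trivial, by ring, by ring⟩
  have hGd : HasFDerivAt G D (0, v) := by
    exact hasFDerivAt_fst.prodMk
      (((hasFDerivAt_psi (φ i) (hφ i) (a i) (δa i) v).sub
        (hasFDerivAt_psi (φ j) (hφ j) (a j) (δa j) v)).prodMk
       ((hasFDerivAt_psi (φ i) (hφ i) (a i) (δa i) v).sub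
        (hasFDerivAt_psi (φ k) (hφ k) (a k) (δa k) v)))
  -- D is injective
  have hker : ∀ p : ℝ × Plane, D p = 0 → p = 0 := by
    intro p hp
    rw [hDapp] at hp
    have h0 : p.1 = 0 := congrArg Prod.fst hp
    have h1 : (inner ℝ g p.2 : ℝ) + (ci - cj) * p.1 = 0 := congrArg (fun x => x.2.1) hp
    have h2 : (inner ℝ h p.2 : ℝ) + (ci - ck) * p.1 = 0 := congrArg (fun x => x.2.2) hp
    rw [h0, mul_zero, add_zero] at h1 h2
    have hc := cramer9 g h p.2 Q hQdet
    rw [h1, h2, zero_smul, zero_smul, sub_zero] at hc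
    have hp2 : p.2 = 0 := by
      rcases smul_eq_zero.1 hc.symm with hQ0 | hp2
      · exact absurd hQ0 (hQdef ▸ hQ)
      · exact hp2
    exact Prod.ext h0 hp2
  have hinj : Function.Injective D := by
    intro p₁ p₂ hp
    have : D (p₁ - p₂) = 0 := by rw [map_sub, hp, sub_self]
    have := hker _ this
    exact sub_eq_zero.1 this
  have hfr : Module.finrank ℝ (ℝ × Plane) = Module.finrank ℝ (ℝ × ℝ × ℝ) := by
    simp [Module.finrank_prod]
  set e : (ℝ × Plane) ≃L[ℝ] ℝ × ℝ × ℝ :=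
    (LinearMap.linearEquivOfInjective D.toLinearMap hinj hfr).toContinuousLinearEquiv with hedef
  have happ : ∀ p : ℝ × Plane, e p = D p := fun p => rfl
  have heD : (e : (ℝ × Plane) →L[ℝ] ℝ × ℝ × ℝ) = D := ContinuousLinearMap.ext happ
  have hGstrict : HasStrictFDerivAt G (e : (ℝ × Plane) →L[ℝ] ℝ × ℝ × ℝ) (0, v) :=
    hGs.contDiffAt.hasStrictFDerivAt' (heD ▸ hGd) (by simp)
  set f := hGstrict.toOpenPartialHomeomorph G with hfdef
  have hfcoe : ⇑f = G := rfl
  have hsrc : ((0:ℝ), v) ∈ f.source := hGstrict.mem_toOpenPartialHomeomorph_source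
  have hψ0 : ∀ m, ψ m ((0:ℝ), v) = φ m v (a m) := by
    intro m; show φ m v (a m + (0:ℝ) • δa m) = φ m v (a m); rw [zero_smul, add_zero]
  have hGv : G ((0:ℝ), v) = ((0:ℝ), (0:ℝ), (0:ℝ)) := by
    have e1 : ψ i ((0:ℝ), v) - ψ j ((0:ℝ), v) = 0 := by rw [hψ0, hψ0, hvij, sub_self]
    have e2 : ψ i ((0:ℝ), v) - ψ k ((0:ℝ), v) = 0 := by rw [hψ0, hψ0, hvik, sub_self]
    show ((0:ℝ), (ψ i ((0:ℝ), v) - ψ j ((0:ℝ), v), ψ i ((0:ℝ), v) - ψ k ((0:ℝ), v)))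
        = ((0:ℝ), (0:ℝ), (0:ℝ))
    rw [e1, e2]
  have hfder0 : fderiv ℝ G ((0:ℝ), v) = (e : (ℝ × Plane) →L[ℝ] ℝ × ℝ × ℝ) :=
    hGstrict.hasFDerivAt.fderiv
  -- the set where the derivative of G is invertible
  set T : (ℝ × Plane) → ((ℝ × Plane) →L[ℝ] (ℝ × Plane)) :=
    fun p => ((e.symm : (ℝ × ℝ × ℝ) →L[ℝ] ℝ × Plane).comp (fderiv ℝ G p)) with hTdef
  have hTc : Continuous T :=
    continuous_const.clm_comp (hGs.continuous_fderiv (by simp))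
  set W : Set (ℝ × Plane) := T ⁻¹' {x | IsUnit x} with hWdef
  have hWopen : IsOpen W := Units.isOpen.preimage hTc
  have h0W : ((0:ℝ), v) ∈ W := by
    show IsUnit (T ((0:ℝ), v))
    have hT0 : T ((0:ℝ), v) = (1 : (ℝ × Plane) →L[ℝ] (ℝ × Plane)) := by
      apply ContinuousLinearMap.ext
      intro p
      show (e.symm : (ℝ × ℝ × ℝ) →L[ℝ] ℝ × Plane) (fderiv ℝ G ((0:ℝ), v) p) = p
      rw [hfder0]
      show e.symm (e p) = p
      exact e.symm_apply_apply p
    rw [hT0]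
    exact isUnit_one
  have h0T : ((0:ℝ), (0:ℝ), (0:ℝ)) ∈ f.target := by
    rw [← hGv]
    exact hGstrict.image_mem_toOpenPartialHomeomorph_target
  have hsymm0 : f.symm ((0:ℝ), (0:ℝ), (0:ℝ)) = ((0:ℝ), v) := by
    rw [← hGv]
    exact f.left_inv hsrc
  set V : Set (ℝ × ℝ × ℝ) := f.target ∩ f.symm ⁻¹' W with hVdef
  have hVopen : IsOpen V := f.isOpen_inter_preimage_symm hWopen
  have h0V : ((0:ℝ), (0:ℝ), (0:ℝ)) ∈ V := by
    refine ⟨h0T, ?_⟩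
    rw [mem_preimage, hsymm0]
    exact h0W
  -- smoothness of the inverse on V
  have hsymmAt : ∀ y ∈ V, ContDiffAt ℝ (⊤ : ℕ∞) f.symm y := by
    rintro y ⟨hyt, hyW⟩
    have hxW : IsUnit (T (f.symm y)) := hyW
    obtain ⟨u, hu⟩ := hxW
    set e' : (ℝ × Plane) ≃L[ℝ] ℝ × ℝ × ℝ :=
      ((ContinuousLinearEquiv.unitsEquiv ℝ (ℝ × Plane)) u).trans e with he'def
    have he'eq : (e' : (ℝ × Plane) →L[ℝ] ℝ × ℝ × ℝ) = fderiv ℝ G (f.symm y) := by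
      apply ContinuousLinearMap.ext
      intro p
      have h1 : (u : (ℝ × Plane) →L[ℝ] (ℝ × Plane)) p
          = e.symm (fderiv ℝ G (f.symm y) p) := by rw [hu]; rfl
      show e ((u : (ℝ × Plane) →L[ℝ] (ℝ × Plane)) p) = fderiv ℝ G (f.symm y) p
      rw [h1]
      exact e.apply_symm_apply _
    have hfd : HasFDerivAt G (e' : (ℝ × Plane) →L[ℝ] ℝ × ℝ × ℝ) (f.symm y) := by
      have hd := ((hGs.differentiable (by simp)).differentiableAt
        (x := f.symm y)).hasFDerivAt
      rwa [← he'eq] at hd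
    exact f.contDiffAt_symm hyt hfd hGs.contDiffAt
  have hsymmV : ContDiffOn ℝ (⊤ : ℕ∞) f.symm V := fun y hy =>
    (hsymmAt y hy).contDiffWithinAt
  -- choose radii
  obtain ⟨ρ, hρpos, hρsrc⟩ : ∃ ρ > 0, ball ((0:ℝ), v) ρ ⊆ f.source :=
    Metric.isOpen_iff.1 f.open_source _ hsrc
  obtain ⟨δ₁, hδ₁pos, hδ₁⟩ : ∃ δ₁ > 0, ∀ ⦃y : ℝ × ℝ × ℝ⦄,
      dist y ((0:ℝ), (0:ℝ), (0:ℝ)) < δ₁ → dist (f.symm y) ((0:ℝ), v) < ρ / 2 := by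
    have hc : ContinuousAt f.symm ((0:ℝ), (0:ℝ), (0:ℝ)) := f.continuousAt_symm h0T
    have := Metric.continuousAt_iff.1 hc (ρ / 2) (by linarith)
    obtain ⟨δ₁, hδ₁pos, hδ₁⟩ := this
    exact ⟨δ₁, hδ₁pos, fun y hy => by
      have := hδ₁ hy; rwa [hsymm0] at this⟩
  obtain ⟨δ₂, hδ₂pos, hδ₂⟩ : ∃ δ₂ > 0, ball ((0:ℝ), (0:ℝ), (0:ℝ)) δ₂ ⊆ V :=
    Metric.isOpen_iff.1 hVopen _ h0V
  set η : ℝ := min δ₁ δ₂ with hηdef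
  have hηpos : 0 < η := lt_min hδ₁pos hδ₂pos
  set τ₁ : ℝ := η / 2 with hτ₁def
  have hτ₁pos : 0 < τ₁ := by positivity
  -- the curve
  set z : ℝ → Plane := fun t => (f.symm (t, (0:ℝ), (0:ℝ))).2 with hzdef
  have hmemball : ∀ t ∈ Icc (0:ℝ) τ₁,
      ((t, (0:ℝ), (0:ℝ)) : ℝ × ℝ × ℝ) ∈ ball ((0:ℝ), (0:ℝ), (0:ℝ)) η := by
    rintro t ⟨ht0, ht1⟩
    rw [mem_ball]
    have : dist ((t, (0:ℝ), (0:ℝ)) : ℝ × ℝ × ℝ) ((0:ℝ), (0:ℝ), (0:ℝ)) = |t| := by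
      simp [Prod.dist_eq, Real.dist_eq, Prod.norm_def, Real.norm_eq_abs]
    rw [this, abs_of_nonneg ht0]
    calc t ≤ τ₁ := ht1
    _ < η := by rw [hτ₁def]; linarith
  have hmemV : ∀ t ∈ Icc (0:ℝ) τ₁, ((t, (0:ℝ), (0:ℝ)) : ℝ × ℝ × ℝ) ∈ V := fun t ht =>
    hδ₂ (ball_subset_ball (min_le_right _ _) (hmemball t ht))
  have hmemT : ∀ t ∈ Icc (0:ℝ) τ₁, ((t, (0:ℝ), (0:ℝ)) : ℝ × ℝ × ℝ) ∈ f.target :=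
    fun t ht => (hmemV t ht).1
  have hright : ∀ t ∈ Icc (0:ℝ) τ₁,
      G (f.symm (t, (0:ℝ), (0:ℝ))) = ((t, (0:ℝ), (0:ℝ)) : ℝ × ℝ × ℝ) :=
    fun t ht => f.right_inv (hmemT t ht)
  have hsymm_eq : ∀ t ∈ Icc (0:ℝ) τ₁, f.symm ((t, (0:ℝ), (0:ℝ)) : ℝ × ℝ × ℝ) = (t, z t) := by
    intro t ht
    have h1 := hright t ht
    have h2 : (G (f.symm ((t, (0:ℝ), (0:ℝ)) : ℝ × ℝ × ℝ))).1 = t := by rw [h1]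
    exact Prod.ext h2 rfl
  have hsymm_near : ∀ t ∈ Icc (0:ℝ) τ₁,
      dist (f.symm ((t, (0:ℝ), (0:ℝ)) : ℝ × ℝ × ℝ)) ((0:ℝ), v) < ρ / 2 := by
    intro t ht
    exact hδ₁ (ball_subset_ball (min_le_left _ _) (hmemball t ht))
  have hz0 : z 0 = v := by
    rw [hzdef]
    show (f.symm ((0:ℝ), (0:ℝ), (0:ℝ))).2 = v
    rw [hsymm0]
  have hGz : ∀ t ∈ Icc (0:ℝ) τ₁, G ((t, z t) : ℝ × Plane) = (t, (0:ℝ), (0:ℝ)) := by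
    intro t ht
    rw [← hsymm_eq t ht]
    exact hright t ht
  have hzeq : ∀ t ∈ Icc (0:ℝ) τ₁,
      φ i (z t) (a i + t • δa i) = φ j (z t) (a j + t • δa j) ∧
      φ i (z t) (a i + t • δa i) = φ k (z t) (a k + t • δa k) := by
    intro t ht
    have h1 := hGz t ht
    have h2 : ψ i ((t, z t) : ℝ × Plane) - ψ j (t, z t) = 0 :=
      congrArg (fun x : ℝ × ℝ × ℝ => x.2.1) h1
    have h3 : ψ i ((t, z t) : ℝ × Plane) - ψ k (t, z t) = 0 :=
      congrArg (fun x : ℝ × ℝ × ℝ => x.2.2) h1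
    exact ⟨sub_eq_zero.1 h2, sub_eq_zero.1 h3⟩
  -- smoothness of z
  have hιs : ContDiff ℝ (⊤ : ℕ∞) (fun t : ℝ => ((t, (0:ℝ), (0:ℝ)) : ℝ × ℝ × ℝ)) :=
    contDiff_id.prodMk contDiff_const
  have hmaps : MapsTo (fun t : ℝ => ((t, (0:ℝ), (0:ℝ)) : ℝ × ℝ × ℝ)) (Icc (0:ℝ) τ₁) V :=
    fun t ht => hmemV t ht
  have hzOn : ContDiffOn ℝ (⊤ : ℕ∞) z (Icc (0:ℝ) τ₁) := by
    have h1 : ContDiffOn ℝ (⊤ : ℕ∞) (fun t : ℝ => f.symm ((t, (0:ℝ), (0:ℝ)) : ℝ × ℝ × ℝ))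
        (Icc (0:ℝ) τ₁) := hsymmV.comp (hιs.contDiffOn) hmaps
    exact contDiff_snd.comp_contDiffOn h1
  -- derivative of z at 0
  have hsymm_strict : HasStrictFDerivAt f.symm
      ((e.symm : (ℝ × ℝ × ℝ) →L[ℝ] ℝ × Plane)) ((0:ℝ), (0:ℝ), (0:ℝ)) := by
    have := hGstrict.to_localInverse
    rwa [hGv] at this
  have hι : HasDerivAt (fun t : ℝ => ((t, (0:ℝ), (0:ℝ)) : ℝ × ℝ × ℝ))
      ((1:ℝ), (0:ℝ), (0:ℝ)) 0 :=
    (hasDerivAt_id (0:ℝ)).prodMk (hasDerivAt_const _ _)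
  have hcompd : HasDerivAt (fun t : ℝ => f.symm ((t, (0:ℝ), (0:ℝ)) : ℝ × ℝ × ℝ))
      (e.symm ((1:ℝ), (0:ℝ), (0:ℝ))) 0 := by
    have h1 : HasFDerivAt f.symm ((e.symm : (ℝ × ℝ × ℝ) →L[ℝ] ℝ × Plane))
        ((fun t : ℝ => ((t, (0:ℝ), (0:ℝ)) : ℝ × ℝ × ℝ)) 0) := hsymm_strict.hasFDerivAt
    exact h1.comp_hasDerivAt 0 hι
  have hzd : HasDerivAt z ((e.symm ((1:ℝ), (0:ℝ), (0:ℝ))).2) 0 := hcompd.snd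
  -- compute the derivative
  set u₀ : Plane := (Q⁻¹ * (ci - cj)) • perp h - (Q⁻¹ * (ci - ck)) • perp g with hu₀def
  have hgph : (inner ℝ g (perp h) : ℝ) = -Q := by
    rw [inner_plane, perp_apply0, perp_apply1, hQdet]; ring
  have hgpg : (inner ℝ g (perp g) : ℝ) = 0 := by
    rw [inner_plane, perp_apply0, perp_apply1]; ring
  have hhph : (inner ℝ h (perp h) : ℝ) = 0 := by
    rw [inner_plane, perp_apply0, perp_apply1]; ring
  have hhpg : (inner ℝ h (perp g) : ℝ) = Q := by
    rw [inner_plane, perp_apply0, perp_apply1, hQdet]; ring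
  have hQne : Q ≠ 0 := hQdef ▸ hQ
  have hDu₀ : D ((1:ℝ), u₀) = ((1:ℝ), (0:ℝ), (0:ℝ)) := by
    rw [hDapp]
    have h1 : (inner ℝ g u₀ : ℝ) = -(ci - cj) := by
      rw [hu₀def, inner_sub_right, real_inner_smul_right, real_inner_smul_right,
        hgph, hgpg]
      field_simp
      ring
    have h2 : (inner ℝ h u₀ : ℝ) = -(ci - ck) := by
      rw [hu₀def, inner_sub_right, real_inner_smul_right, real_inner_smul_right,
        hhph, hhpg]
      field_simp
      ring
    show ((1:ℝ), ((inner ℝ g u₀ : ℝ) + (ci - cj) * 1, (inner ℝ h u₀ : ℝ) + (ci - ck) * 1))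
        = ((1:ℝ), (0:ℝ), (0:ℝ))
    rw [h1, h2]
    norm_num
  have hesymm : e.symm ((1:ℝ), (0:ℝ), (0:ℝ)) = ((1:ℝ), u₀) := by
    have : e ((1:ℝ), u₀) = ((1:ℝ), (0:ℝ), (0:ℝ)) := by rw [happ]; exact hDu₀
    rw [← this, e.symm_apply_apply]
  have hMv : u₀ = Mv φ a j k i v (δa i) + Mv φ a k i j v (δa j) + Mv φ a i j k v (δa k) := by
    have hQjki : Qv φ a j k i v = Q := by
      rw [hQdet, Qv, Matrix.det_fin_two_of]
      simp only [PiLp.sub_apply, hg, hh, ← hgi, ← hgj, ← hgk]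
      ring
    have hQkij : Qv φ a k i j v = Q := by
      rw [hQdet, Qv, Matrix.det_fin_two_of]
      simp only [PiLp.sub_apply, hg, hh, ← hgi, ← hgj, ← hgk]
      ring
    rw [Mv, Mv, Mv, hQjki, hQkij, ← hQdef, ← hci, ← hcj, ← hck]
    apply plane_ext <;>
      simp only [hu₀def, PiLp.sub_apply, PiLp.add_apply, PiLp.smul_apply, smul_eq_mul,
        perp_apply0, perp_apply1, hg, hh, ← hgi, ← hgj, ← hgk] <;>
      · field_simp
        ring
  have hzd' : HasDerivWithinAt z
      (Mv φ a j k i v (δa i) + Mv φ a k i j v (δa j) + Mv φ a i j k v (δa k))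
      (Icc (0:ℝ) τ₁) 0 := by
    have : (e.symm ((1:ℝ), (0:ℝ), (0:ℝ))).2 = u₀ := by rw [hesymm]
    rw [← hMv, ← this]
    exact hzd.hasDerivWithinAt
  -- uniqueness
  have huniq : ∀ w : ℝ → Plane,
      (ContDiffOn ℝ (⊤ : ℕ∞) w (Icc 0 τ₁) ∧ w 0 = v ∧
        ∀ t ∈ Icc (0:ℝ) τ₁,
          φ i (w t) (a i + t • δa i) = φ j (w t) (a j + t • δa j) ∧
          φ i (w t) (a i + t • δa i) = φ k (w t) (a k + t • δa k)) →
      EqOn w z (Icc 0 τ₁) := by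
    rintro w ⟨hwsm, hw0, hweq⟩
    have hGw : ∀ t ∈ Icc (0:ℝ) τ₁, G ((t, w t) : ℝ × Plane) = (t, (0:ℝ), (0:ℝ)) := by
      intro t ht
      show (t, (ψ i (t, w t) - ψ j (t, w t), ψ i (t, w t) - ψ k (t, w t)))
          = ((t, (0:ℝ), (0:ℝ)) : ℝ × ℝ × ℝ)
      have h1 : ψ i ((t, w t) : ℝ × Plane) - ψ j (t, w t) = 0 :=
        sub_eq_zero.2 (hweq t ht).1
      have h2 : ψ i ((t, w t) : ℝ × Plane) - ψ k (t, w t) = 0 :=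
        sub_eq_zero.2 (hweq t ht).2
      rw [h1, h2]
    have key : ∀ t ∈ Icc (0:ℝ) τ₁,
        dist ((t, w t) : ℝ × Plane) ((0:ℝ), v) < ρ → w t = z t := by
      intro t ht hd
      have hsrc' : ((t, w t) : ℝ × Plane) ∈ f.source := hρsrc hd
      have h1 : f.symm (f ((t, w t) : ℝ × Plane)) = (t, w t) := f.left_inv hsrc'
      have h2 : f ((t, w t) : ℝ × Plane) = ((t, (0:ℝ), (0:ℝ)) : ℝ × ℝ × ℝ) := hGw t ht
      rw [h2] at h1
      have := congrArg Prod.snd h1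
      exact this.symm
    have key2 : ∀ t ∈ Icc (0:ℝ) τ₁, w t = z t →
        dist ((t, w t) : ℝ × Plane) ((0:ℝ), v) < ρ / 2 := by
      intro t ht hwz
      have h1 : ((t, w t) : ℝ × Plane) = f.symm ((t, (0:ℝ), (0:ℝ)) : ℝ × ℝ × ℝ) := by
        rw [hwz, hsymm_eq t ht]
      rw [h1]
      exact hsymm_near t ht
    haveI : PreconnectedSpace (Icc (0:ℝ) τ₁) := Subtype.preconnectedSpace isPreconnected_Icc
    set S : Set (Icc (0:ℝ) τ₁) := {t | w t = z t} with hSdef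
    have hSeq : S = {t : Icc (0:ℝ) τ₁ | dist (((t : ℝ), w t) : ℝ × Plane) ((0:ℝ), v) < ρ} := by
      ext t
      constructor
      · intro hts
        exact lt_of_lt_of_le (key2 t t.2 hts) (by linarith)
      · intro htd
        exact key t t.2 htd
    have hwc : Continuous (fun t : Icc (0:ℝ) τ₁ => w t) :=
      continuousOn_iff_continuous_restrict.1 hwsm.continuousOn
    have hzc : Continuous (fun t : Icc (0:ℝ) τ₁ => z t) :=
      continuousOn_iff_continuous_restrict.1 hzOn.continuousOn
    have hSopen : IsOpen S := by
      rw [hSeq]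
      have hc : Continuous (fun t : Icc (0:ℝ) τ₁ => (((t : ℝ), w t) : ℝ × Plane)) :=
        continuous_subtype_val.prodMk hwc
      exact isOpen_lt (hc.dist continuous_const) continuous_const
    have hSclosed : IsClosed S := isClosed_eq hwc hzc
    have hS0 : (⟨0, ⟨le_refl 0, le_of_lt hτ₁pos⟩⟩ : Icc (0:ℝ) τ₁) ∈ S := by
      show w 0 = z 0
      rw [hw0, hz0]
    have hSuniv : S = univ := IsClopen.eq_univ ⟨hSclosed, hSopen⟩ ⟨_, hS0⟩
    intro t ht
    have : (⟨t, ht⟩ : Icc (0:ℝ) τ₁) ∈ S := by rw [hSuniv]; trivial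
    exact this
  exact ⟨τ₁, hτ₁pos, z, ⟨hzOn, hz0, hzeq⟩, huniq, hzd'⟩
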